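/- arXiv:1303.1831 — 2 statements merged into one kernel-verified Lean document; each statement's English description precedes it below -/
import Mathlib

section
/- Let M = c_M·10^m and B = c·10^b with c_M, c ∈ (1,10), m, b ∈ ℤ. Choose a positive integer k with −2b − k < 0, and set r = 10^(−m−2b−2k), H = (c/2)·10^(−m−3b−3k), and L = H/B. Then r ≥ H ≥ M·r²/2 and r ≥ L ≥ M·r²/2. -/
lemma pll_key (A B : ℝ) (e1 e2 : ℤ) (hA : 0 ≤ A) (hB : 0 ≤ B)
    (hAB : A ≤ 10 * B) (he : e1 + 1 ≤ e2) : A * (10 : ℝ) ^ e1 ≤ B * (10 : ℝ) ^ e2 := by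
  have h1 : (10 : ℝ) ^ (e1 + 1) ≤ 10 ^ e2 := zpow_le_zpow_right₀ (by norm_num) he
  have h2 : (10 : ℝ) ^ (e1 + 1) = 10 ^ e1 * 10 := by
    rw [zpow_add₀ (by norm_num : (10:ℝ) ≠ 0)]; norm_num
  have hp : (0:ℝ) < (10:ℝ) ^ e1 := zpow_pos (by norm_num) _
  calc A * (10:ℝ) ^ e1 ≤ (10 * B) * (10:ℝ) ^ e1 := by
        exact mul_le_mul_of_nonneg_right hAB hp.le
    _ = B * ((10:ℝ) ^ (e1 + 1)) := by rw [h2]; ring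
    _ ≤ B * (10:ℝ) ^ e2 := mul_le_mul_of_nonneg_left h1 hB

/-- With `M = c_M·10^m`, `B = c·10^b`, `c_M, c ∈ (1,10)`, a positive
integer `k` with `-2b - k < 0`, `r = 10^(-m-2b-2k)`, `H = (c/2)·10^(-m-3b-3k)` and
`L = H / B`, we have `r ≥ H ≥ M·r²/2` and `r ≥ L ≥ M·r²/2`. -/
theorem parallelogram_inequalities (m b : ℤ) (k : ℕ) (cM c : ℝ)
    (hcM : cM ∈ Set.Ioo (1 : ℝ) 10) (hc : c ∈ Set.Ioo (1 : ℝ) 10)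
    (hk : 0 < k) (hkb : -2 * b - (k : ℤ) < 0) :
    ((c / 2) * (10 : ℝ) ^ (-m - 3 * b - 3 * (k : ℤ)) ≤ (10 : ℝ) ^ (-m - 2 * b - 2 * (k : ℤ)) ∧
      (cM * (10 : ℝ) ^ m) * ((10 : ℝ) ^ (-m - 2 * b - 2 * (k : ℤ))) ^ 2 / 2 ≤
        (c / 2) * (10 : ℝ) ^ (-m - 3 * b - 3 * (k : ℤ))) ∧
    (((c / 2) * (10 : ℝ) ^ (-m - 3 * b - 3 * (k : ℤ))) / (c * (10 : ℝ) ^ b) ≤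
        (10 : ℝ) ^ (-m - 2 * b - 2 * (k : ℤ)) ∧
      (cM * (10 : ℝ) ^ m) * ((10 : ℝ) ^ (-m - 2 * b - 2 * (k : ℤ))) ^ 2 / 2 ≤
        ((c / 2) * (10 : ℝ) ^ (-m - 3 * b - 3 * (k : ℤ))) / (c * (10 : ℝ) ^ b)) := by
  obtain ⟨hcM1, hcM10⟩ := hcM
  obtain ⟨hc1, hc10⟩ := hc
  have h10 : (10 : ℝ) ≠ 0 := by norm_num
  have hz : ∀ a b : ℤ, (10:ℝ) ^ (a + b) = 10 ^ a * 10 ^ b := fun a b => zpow_add₀ h10 a b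
  have hk1 : (1 : ℤ) ≤ (k : ℤ) := by exact_mod_cast hk
  have hcne : c ≠ 0 := by linarith
  have hbne : ((10:ℝ) ^ b) ≠ 0 := zpow_ne_zero _ h10
  -- rewrite M·r²/2 as (cM/2)·10^(-m-4b-4k)
  have hMr : (cM * (10 : ℝ) ^ m) * ((10 : ℝ) ^ (-m - 2 * b - 2 * (k : ℤ))) ^ 2 / 2
      = (cM / 2) * (10:ℝ) ^ (-m - 4 * b - 4 * (k : ℤ)) := by
    have : (-m - 4 * b - 4 * (k : ℤ)) = m + ((-m - 2*b - 2*(k:ℤ)) + (-m - 2*b - 2*(k:ℤ))) := by ring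
    rw [this, hz, hz]; ring
  -- rewrite L as (1/2)·10^(-m-4b-3k)
  have hL : ((c / 2) * (10 : ℝ) ^ (-m - 3 * b - 3 * (k : ℤ))) / (c * (10 : ℝ) ^ b)
      = (1 / 2) * (10:ℝ) ^ (-m - 4 * b - 3 * (k : ℤ)) := by
    have : (-m - 3 * b - 3 * (k : ℤ)) = b + (-m - 4*b - 3*(k:ℤ)) := by ring
    rw [this, hz]
    field_simp
  refine ⟨⟨?_, ?_⟩, ?_, ?_⟩
  · have := pll_key (c/2) 1 (-m - 3*b - 3*(k:ℤ)) (-m - 2*b - 2*(k:ℤ))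
      (by linarith) (by norm_num) (by linarith) (by linarith)
    linarith [this]
  · rw [hMr]
    exact pll_key _ _ _ _ (by linarith) (by linarith)
      (by linarith) (by linarith)
  · rw [hL]
    have := pll_key (1/2) 1 (-m - 4*b - 3*(k:ℤ)) (-m - 2*b - 2*(k:ℤ))
      (by norm_num) (by norm_num) (by norm_num) (by linarith)
    linarith [this]
  · rw [hMr, hL]
    exact pll_key _ _ _ _ (by linarith) (by norm_num)
      (by linarith) (by linarith)
end

section
/- For every transversal double point of two C² planar arcs, neither of which has horizontal or vertical tangent at the double point, there exists an intersection parallelogram: a parallelogram P with horizontal top and bottom sides containing the double point in its interior, such that one arc crosses each horizontal side of P exactly once, the other arc crosses each of the two non-horizontal sides exactly once, and neither arc passes through a corner of P. -/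
/-- The solid parallelogram with center `q`, horizontal half-width `L`, vertical
half-height `H`, and non-horizontal sides of direction `(d, 1)`. -/
def paraSet (q : ℝ × ℝ) (d L H : ℝ) : Set (ℝ × ℝ) :=
  {x | ∃ u v : ℝ, |u| ≤ L ∧ |v| ≤ H ∧ x = (q.1 + u + v * d, q.2 + v)}

/-- The corner of the parallelogram with signs `e₁, e₂ ∈ {±1}`. -/
def paraCorner (q : ℝ × ℝ) (d L H e₁ e₂ : ℝ) : ℝ × ℝ :=
  (q.1 + e₁ * L + e₂ * H * d, q.2 + e₂ * H)

/-- The four corners of the parallelogram. -/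
def paraCorners (q : ℝ × ℝ) (d L H : ℝ) : Set (ℝ × ℝ) :=
  {paraCorner q d L H 1 1, paraCorner q d L H 1 (-1),
    paraCorner q d L H (-1) 1, paraCorner q d L H (-1) (-1)}

/-- `CrossingPattern vert horiz q d L H` : the arc `vert` crosses each horizontal side
of the parallelogram exactly once, the arc `horiz` crosses each of the two
non-horizontal sides exactly once, and neither arc passes through a corner. -/
def CrossingPattern (vert horiz : ℝ → ℝ × ℝ) (q : ℝ × ℝ) (d L H : ℝ) : Prop :=
  (∃! t, t ∈ Set.Icc (0 : ℝ) 1 ∧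
      vert t ∈ segment ℝ (paraCorner q d L H (-1) 1) (paraCorner q d L H 1 1)) ∧
  (∃! t, t ∈ Set.Icc (0 : ℝ) 1 ∧
      vert t ∈ segment ℝ (paraCorner q d L H (-1) (-1)) (paraCorner q d L H 1 (-1))) ∧
  (∃! s, s ∈ Set.Icc (0 : ℝ) 1 ∧
      horiz s ∈ segment ℝ (paraCorner q d L H (-1) (-1)) (paraCorner q d L H (-1) 1)) ∧
  (∃! s, s ∈ Set.Icc (0 : ℝ) 1 ∧
      horiz s ∈ segment ℝ (paraCorner q d L H 1 (-1)) (paraCorner q d L H 1 1)) ∧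
  (∀ t ∈ Set.Icc (0 : ℝ) 1, vert t ∉ paraCorners q d L H) ∧
  (∀ s ∈ Set.Icc (0 : ℝ) 1, horiz s ∉ paraCorners q d L H)

/-!
Shear the plane so that the tangent of `γ₁` at the double point `q` becomes vertical: with `d` the
inverse slope of that tangent, the parallelogram is the box `|shear d x - shear d q| ≤ L`,
`|x.2 - q.2| ≤ H` in the coordinates `(shear d x, x.2)`. Along `γ₁` the height has nonzero
derivative while the shear coordinate is stationary; along `γ₂` the shear coordinate has nonzero
derivative by transversality. Near the double point each arc is therefore a graph over its moving
coordinate and crosses the two sides transverse to it exactly once, as long as the aspect ratio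
`L / H` keeps the other coordinate strictly inside the box. Injectivity on the compact parameter
interval keeps the rest of each arc away from a small enough parallelogram.
-/

open Set Filter Topology Metric

def shear (d : ℝ) : ℝ × ℝ →L[ℝ] ℝ :=
  ContinuousLinearMap.fst ℝ ℝ ℝ - d • ContinuousLinearMap.snd ℝ ℝ ℝ

@[simp]
theorem shear_apply (d : ℝ) (x : ℝ × ℝ) : shear d x = x.1 - d * x.2 := rfl

theorem shear_div_self {p : ℝ × ℝ} (hp : p.2 ≠ 0) : shear (p.1 / p.2) p = 0 := by
  simp [div_mul_cancel₀ _ hp]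

theorem shear_div_ne_zero {p w : ℝ × ℝ} (hp : p.2 ≠ 0) (hpw : p.1 * w.2 - p.2 * w.1 ≠ 0) :
    shear (p.1 / p.2) w ≠ 0 := by
  have : shear (p.1 / p.2) w = -(p.1 * w.2 - p.2 * w.1) / p.2 := by
    simp only [shear_apply]; field_simp; ring
  exact this ▸ div_ne_zero (neg_ne_zero.mpr hpw) hp

section Parallelogram

variable {q x : ℝ × ℝ} {d L H : ℝ}

theorem paraSet_eq (q : ℝ × ℝ) (d L H : ℝ) :
    paraSet q d L H = {x | dist (shear d x) (shear d q) ≤ L ∧ dist x.2 q.2 ≤ H} := by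
  ext x
  simp only [paraSet, mem_ofPred_eq, shear_apply, Real.dist_eq]
  constructor
  · rintro ⟨u, v, hu, hv, rfl⟩
    constructor
    · convert hu using 2; ring
    · convert hv using 2; ring
  · rintro ⟨hu, hv⟩
    refine ⟨_, _, hu, hv, ?_⟩
    ext <;> simp only <;> ring

theorem mem_interior_paraSet (hL : 0 < L) (hH : 0 < H) : q ∈ interior (paraSet q d L H) := by
  have h₁ : IsOpen {x : ℝ × ℝ | dist (shear d x) (shear d q) < L} :=
    isOpen_lt (by fun_prop) continuous_const
  have h₂ : IsOpen {x : ℝ × ℝ | dist x.2 q.2 < H} := isOpen_lt (by fun_prop) continuous_const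
  refine interior_maximal ?_ (h₁.inter h₂) ⟨by simpa using hL, by simpa using hH⟩
  rw [paraSet_eq]
  exact fun x hx => ⟨hx.1.le, hx.2.le⟩

theorem norm_le_shear (d : ℝ) (x : ℝ × ℝ) : ‖x‖ ≤ (|d| + 1) * (|shear d x| + |x.2|) := by
  have h₁ : x.1 = shear d x + d * x.2 := by simp only [shear_apply]; ring
  have h₂ := abs_add_le (shear d x) (d * x.2)
  rw [← h₁, abs_mul] at h₂
  rw [Prod.norm_def, Real.norm_eq_abs, Real.norm_eq_abs]
  have := mul_nonneg (abs_nonneg d) (abs_nonneg (shear d x))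
  have := mul_nonneg (abs_nonneg d) (abs_nonneg x.2)
  have := abs_nonneg (shear d x)
  have := abs_nonneg x.2
  exact max_le (by linarith) (by linarith)

theorem mem_horizontal_side_iff (hL : 0 < L) (e : ℝ) :
    x ∈ segment ℝ (paraCorner q d L H (-1) e) (paraCorner q d L H 1 e) ↔
      x.2 = q.2 + e * H ∧ dist (shear d x) (shear d q) ≤ L := by
  rw [segment_eq_image, Real.dist_eq, abs_le]
  constructor
  · rintro ⟨θ, ⟨h₀, h₁⟩, rfl⟩
    simp only [paraCorner, shear_apply, Prod.smul_mk, Prod.mk_add_mk, smul_eq_mul]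
    refine ⟨by ring, by nlinarith, by nlinarith⟩
  · rintro ⟨h₂, h₁, h₁'⟩
    refine ⟨(shear d x - shear d q + L) / (2 * L),
      ⟨div_nonneg (by linarith) (by positivity), ?_⟩, ?_⟩
    · rw [div_le_one (by positivity)]; linarith
    · ext
      · simp only [paraCorner, shear_apply, Prod.smul_mk, Prod.mk_add_mk, smul_eq_mul]
        field_simp
        rw [h₂]; ring
      · simp only [paraCorner, Prod.smul_mk, Prod.mk_add_mk, smul_eq_mul, h₂]
        ring

theorem mem_slanted_side_iff (hH : 0 < H) (e : ℝ) :
    x ∈ segment ℝ (paraCorner q d L H e (-1)) (paraCorner q d L H e 1) ↔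
      shear d x = shear d q + e * L ∧ dist x.2 q.2 ≤ H := by
  rw [segment_eq_image, Real.dist_eq, abs_le]
  constructor
  · rintro ⟨θ, ⟨h₀, h₁⟩, rfl⟩
    simp only [paraCorner, shear_apply, Prod.smul_mk, Prod.mk_add_mk, smul_eq_mul]
    refine ⟨by ring, by nlinarith, by nlinarith⟩
  · rintro ⟨h₁, h₂, h₂'⟩
    refine ⟨(x.2 - q.2 + H) / (2 * H), ⟨div_nonneg (by linarith) (by positivity), ?_⟩, ?_⟩
    · rw [div_le_one (by positivity)]; linarith
    · simp only [shear_apply] at h₁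
      ext
      · simp only [paraCorner, Prod.smul_mk, Prod.mk_add_mk, smul_eq_mul]
        field_simp
        linear_combination (-2 * H) * h₁
      · simp only [paraCorner, Prod.smul_mk, Prod.mk_add_mk, smul_eq_mul]
        field_simp
        ring

theorem shear_paraCorner (q : ℝ × ℝ) (d L H e₁ e₂ : ℝ) :
    shear d (paraCorner q d L H e₁ e₂) = shear d q + e₁ * L := by
  simp only [paraCorner, shear_apply]; ring

theorem dist_eq_of_mem_paraCorners (hL : 0 ≤ L) (hH : 0 ≤ H) (hx : x ∈ paraCorners q d L H) :
    dist (shear d x) (shear d q) = L ∧ dist x.2 q.2 = H := by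
  simp only [paraCorners, mem_insert_iff, mem_singleton_iff] at hx
  rcases hx with rfl | rfl | rfl | rfl <;>
    rw [Real.dist_eq, Real.dist_eq, shear_paraCorner, add_sub_cancel_left] <;>
    norm_num [paraCorner, abs_of_nonneg hL, abs_of_nonneg hH]

end Parallelogram

theorem crossingPattern_of_crossings {vert horiz : ℝ → ℝ × ℝ} {q : ℝ × ℝ} {d L H : ℝ}
    (hL : 0 < L) (hH : 0 < H)
    (vert_cross : ∀ c ∈ closedBall q.2 H, ∃! t, t ∈ Icc (0 : ℝ) 1 ∧
      (vert t).2 = c ∧ dist (shear d (vert t)) (shear d q) ≤ L)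
    (vert_inside : ∀ t ∈ Icc (0 : ℝ) 1, dist (vert t).2 q.2 ≤ H →
      dist (shear d (vert t)) (shear d q) ≤ L → dist (shear d (vert t)) (shear d q) < L)
    (horiz_cross : ∀ c ∈ closedBall (shear d q) L, ∃! s, s ∈ Icc (0 : ℝ) 1 ∧
      shear d (horiz s) = c ∧ dist (horiz s).2 q.2 ≤ H)
    (horiz_inside : ∀ s ∈ Icc (0 : ℝ) 1, dist (shear d (horiz s)) (shear d q) ≤ L →
      dist (horiz s).2 q.2 ≤ H → dist (horiz s).2 q.2 < H) :
    CrossingPattern vert horiz q d L H := by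
  have mem_closedBall_add {c r e : ℝ} (he : |e| = 1) (hr : 0 < r) : c + e * r ∈ closedBall c r := by
    simp [he, abs_of_pos hr]
  have h₁ : |(1 : ℝ)| = 1 := abs_one
  have h₂ : |(-1 : ℝ)| = 1 := by norm_num
  simp only [CrossingPattern, mem_horizontal_side_iff hL, mem_slanted_side_iff hH]
  refine ⟨vert_cross _ (mem_closedBall_add h₁ hH), vert_cross _ (mem_closedBall_add h₂ hH),
    horiz_cross _ (mem_closedBall_add h₂ hL), horiz_cross _ (mem_closedBall_add h₁ hL),
    fun t ht hc => ?_, fun s hs hc => ?_⟩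
  · obtain ⟨hshear, hsnd⟩ := dist_eq_of_mem_paraCorners hL.le hH.le hc
    exact (vert_inside t ht hsnd.le hshear.le).ne hshear
  · obtain ⟨hshear, hsnd⟩ := dist_eq_of_mem_paraCorners hL.le hH.le hc
    exact (horiz_inside s hs hshear.le hsnd.le).ne hsnd

theorem IsCompact.exists_forall_dist_lt_of_injOn {α β : Type*} [PseudoMetricSpace α]
    [MetricSpace β] {K : Set α} {f : α → β} {x₀ : α} {δ : ℝ} (hK : IsCompact K)
    (hf : ContinuousOn f K) (hinj : InjOn f K) (hx₀ : x₀ ∈ K) (hδ : 0 < δ) :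
    ∃ ε > 0, ∀ x ∈ K, dist (f x) (f x₀) < ε → dist x x₀ < δ := by
  have hfar : IsCompact (f '' (K ∩ {x | δ ≤ dist x x₀})) :=
    (hK.inter_right (isClosed_le continuous_const (continuous_id.dist continuous_const))
      ).image_of_continuousOn (hf.mono inter_subset_left)
  have hx₀_far : f x₀ ∉ f '' (K ∩ {x | δ ≤ dist x x₀}) := by
    rintro ⟨x, ⟨hxK, hx⟩, hfx⟩
    rw [hinj hxK hx₀ hfx, mem_ofPred_eq, dist_self] at hx
    exact hx.not_gt hδ
  obtain ⟨ε, hε, hball⟩ := Metric.isOpen_iff.mp hfar.isClosed.isOpen_compl _ hx₀_far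
  exact ⟨ε, hε, fun x hx hfx => not_le.mp fun h => hball (mem_ball.mpr hfx) ⟨x, ⟨hx, h⟩, rfl⟩⟩

theorem HasDerivAt.eventually_dist_le {𝕜 F : Type*} [NontriviallyNormedField 𝕜]
    [NormedAddCommGroup F] [NormedSpace 𝕜 F] {f : 𝕜 → F} {f' : F} {x : 𝕜} {K : ℝ}
    (hf : HasDerivAt f f' x) (hK : ‖f'‖ < K) :
    ∀ᶠ y in 𝓝 x, dist (f y) (f x) ≤ K * dist y x := by
  filter_upwards [hf.isLittleO.def (sub_pos.mpr hK)] with y hy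
  have := norm_sub_norm_le (f y - f x) ((y - x) • f')
  rw [norm_smul] at this
  rw [dist_eq_norm, dist_eq_norm]
  nlinarith [norm_nonneg (y - x)]

theorem HasStrictDerivAt.eventually_dist_le_and_closedBall_subset_image {φ : ℝ → ℝ} {a t₀ : ℝ}
    (hφ : HasStrictDerivAt φ a t₀) (ha : a ≠ 0) :
    ∀ᶠ δ in 𝓝[>] 0,
      (∀ t ∈ closedBall t₀ δ, ∀ t' ∈ closedBall t₀ δ, |a| / 2 * dist t t' ≤ dist (φ t) (φ t')) ∧
      closedBall (φ t₀) (|a| / 2 * δ) ⊆ φ '' closedBall t₀ δ := by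
  obtain ⟨s, hs, hφs⟩ := hφ.hasStrictFDerivAt.approximates_deriv_on_nhds
    (c := ‖a‖₊ / 2) (Or.inr (half_pos (nnnorm_pos.mpr ha)))
  filter_upwards [(eventually_closedBall_subset hs).filter_mono nhdsWithin_le_nhds,
    self_mem_nhdsWithin] with δ hδs (hδ : 0 < δ)
  have approx : ∀ t ∈ closedBall t₀ δ, ∀ t' ∈ closedBall t₀ δ,
      |φ t - φ t' - (t - t') * a| ≤ |a| / 2 * |t - t'| := fun t ht t' ht' => by
    simpa [mul_comm] using hφs t (hδs ht) t' (hδs ht')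
  refine ⟨fun t ht t' ht' => ?_, ?_⟩
  · have := abs_sub_abs_le_abs_sub ((t - t') * a) (φ t - φ t')
    rw [abs_mul, abs_sub_comm ((t - t') * a)] at this
    rw [Real.dist_eq, Real.dist_eq]
    nlinarith [approx t ht t' ht', abs_nonneg (t - t')]
  · have hI : closedBall t₀ δ = uIcc (t₀ - δ) (t₀ + δ) := by
      rw [Real.closedBall_eq_Icc, uIcc_of_le (by linarith)]
    have hright := approx (t₀ + δ) (by simp [hI]) t₀ (mem_closedBall_self hδ.le)
    have hleft := approx (t₀ - δ) (by simp [hI]) t₀ (mem_closedBall_self hδ.le)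
    rw [hI]
    refine Subset.trans ?_ (intermediate_value_uIcc (hφs.continuousOn.mono (hI ▸ hδs)))
    intro y hy
    rw [mem_closedBall, Real.dist_eq, abs_le] at hy
    rw [mem_uIcc]
    simp only [add_sub_cancel_left, sub_sub_cancel_left, abs_neg, abs_of_pos hδ, abs_le,
      neg_mul] at hright hleft
    rcases ha.lt_or_gt with ha | ha
    · rw [abs_of_neg ha] at hy hright hleft
      exact Or.inr ⟨by nlinarith, by nlinarith⟩
    · rw [abs_of_pos ha] at hy hright hleft
      exact Or.inl ⟨by nlinarith, by nlinarith⟩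

theorem existsUnique_crossing_of_expanding {α β γ : Type*} [MetricSpace α] [PseudoMetricSpace β]
    [PseudoMetricSpace γ] {φ : α → β} {ψ : α → γ} {S : Set α} {t₀ : α} {δ m K A B : ℝ}
    (hm : 0 < m) (hK : 0 ≤ K) (hS : closedBall t₀ δ ⊆ S)
    (hexp : ∀ t ∈ closedBall t₀ δ, ∀ t' ∈ closedBall t₀ δ, m * dist t t' ≤ dist (φ t) (φ t'))
    (honto : closedBall (φ t₀) (m * δ) ⊆ φ '' closedBall t₀ δ)
    (hψ : ∀ t ∈ closedBall t₀ δ, dist (ψ t) (ψ t₀) ≤ K * dist t t₀)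
    (hconf : ∀ t ∈ S, dist (φ t) (φ t₀) ≤ A → dist (ψ t) (ψ t₀) ≤ B → t ∈ closedBall t₀ δ)
    (hA : A ≤ m * δ) (hKA : K * A < m * B) :
    (∀ c ∈ closedBall (φ t₀) A, ∃! t, t ∈ S ∧ φ t = c ∧ dist (ψ t) (ψ t₀) ≤ B) ∧
    (∀ t ∈ S, dist (φ t) (φ t₀) ≤ A → dist (ψ t) (ψ t₀) ≤ B → dist (ψ t) (ψ t₀) < B) := by
  have inside : ∀ t ∈ closedBall t₀ δ, dist (φ t) (φ t₀) ≤ A → dist (ψ t) (ψ t₀) < B := by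
    intro t ht hφt
    have hmt := (hexp t ht t₀ (mem_closedBall_self (dist_nonneg.trans ht))).trans hφt
    refine lt_of_mul_lt_mul_left ?_ hm.le
    calc m * dist (ψ t) (ψ t₀) ≤ m * (K * dist t t₀) := mul_le_mul_of_nonneg_left (hψ t ht) hm.le
      _ = K * (m * dist t t₀) := by ring
      _ ≤ K * A := mul_le_mul_of_nonneg_left hmt hK
      _ < m * B := hKA
  refine ⟨fun c hc => ?_, fun t ht hφt hψt => inside t (hconf t ht hφt hψt) hφt⟩
  obtain ⟨t, ht, rfl⟩ := honto (closedBall_subset_closedBall hA hc)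
  refine ⟨t, ⟨hS ht, rfl, (inside t ht hc).le⟩, fun t' ⟨ht'S, hφt', hψt'⟩ => ?_⟩
  have hexp' := hexp t' (hconf t' ht'S (hφt' ▸ hc) hψt') t ht
  rw [hφt', dist_self] at hexp'
  exact dist_le_zero.mp (nonpos_of_mul_nonpos_right hexp' hm)

theorem exists_crossing_scale {E : Type*} [NormedAddCommGroup E] [NormedSpace ℝ E] {γ : ℝ → E}
    {v : E} {t₀ C K : ℝ} (ℓ₁ ℓ₂ : E →L[ℝ] ℝ) (hℓ : ∀ x, ‖x‖ ≤ C * (|ℓ₁ x| + |ℓ₂ x|))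
    (hγ : Continuous γ) (hinj : InjOn γ (Icc 0 1)) (ht₀ : t₀ ∈ Ioo 0 1)
    (hv : HasStrictDerivAt γ v t₀) (hv₁ : ℓ₁ v ≠ 0) (hK : |ℓ₂ v| < K) :
    ∃ r > 0, ∀ A B, A ≤ r → B ≤ r → K * A < |ℓ₁ v| / 2 * B →
      (∀ c ∈ closedBall (ℓ₁ (γ t₀)) A, ∃! t, t ∈ Icc (0 : ℝ) 1 ∧
        ℓ₁ (γ t) = c ∧ dist (ℓ₂ (γ t)) (ℓ₂ (γ t₀)) ≤ B) ∧
      (∀ t ∈ Icc (0 : ℝ) 1, dist (ℓ₁ (γ t)) (ℓ₁ (γ t₀)) ≤ A →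
        dist (ℓ₂ (γ t)) (ℓ₂ (γ t₀)) ≤ B → dist (ℓ₂ (γ t)) (ℓ₂ (γ t₀)) < B) := by
  have hφ : HasStrictDerivAt (ℓ₁ ∘ γ) (ℓ₁ v) t₀ := ℓ₁.hasStrictFDerivAt.comp_hasStrictDerivAt t₀ hv
  have hψ : HasDerivAt (ℓ₂ ∘ γ) (ℓ₂ v) t₀ :=
    (ℓ₂.hasStrictFDerivAt.comp_hasStrictDerivAt t₀ hv).hasDerivAt
  have hU := inter_mem (Icc_mem_nhds ht₀.1 ht₀.2) (hψ.eventually_dist_le hK)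
  obtain ⟨δ, ⟨⟨hexp, honto⟩, hδU⟩, hδ⟩ :=
    (((hφ.eventually_dist_le_and_closedBall_subset_image hv₁).and
      ((eventually_closedBall_subset hU).filter_mono nhdsWithin_le_nhds)).and
      self_mem_nhdsWithin).exists
  obtain ⟨ε, hε, hfar⟩ := isCompact_Icc.exists_forall_dist_lt_of_injOn hγ.continuousOn hinj
    (Ioo_subset_Icc_self ht₀) hδ
  set r := min (|ℓ₁ v| / 2 * δ) (ε / (2 * |C| + 1))
  have hCr : |C| * (r + r) < ε := by
    have : |C| * (r + r) ≤ 2 * |C| * (ε / (2 * |C| + 1)) := by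
      nlinarith [min_le_right (|ℓ₁ v| / 2 * δ) (ε / (2 * |C| + 1)), abs_nonneg C]
    refine this.trans_lt ?_
    rw [mul_div_assoc', div_lt_iff₀ (by positivity)]
    linarith
  refine ⟨r, lt_min (by positivity) (by positivity), fun A B hA hB hKA => ?_⟩
  refine existsUnique_crossing_of_expanding (by positivity) ((abs_nonneg _).trans hK.le)
    (fun t ht => (hδU ht).1) hexp honto (fun t ht => (hδU ht).2) (fun t ht hφt hψt => ?_)
    (hA.trans (min_le_left _ _)) hKA
  refine (hfar t ht ?_).le
  rw [dist_eq_norm]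
  calc ‖γ t - γ t₀‖ ≤ C * (|ℓ₁ (γ t - γ t₀)| + |ℓ₂ (γ t - γ t₀)|) := hℓ _
    _ ≤ |C| * (r + r) := by
      rw [map_sub, map_sub, ← Real.dist_eq, ← Real.dist_eq]
      refine mul_le_mul (le_abs_self C) (add_le_add (hφt.trans hA) (hψt.trans hB)) (by positivity)
        (abs_nonneg C)
    _ < ε := hCr

theorem exists_scales {P Q : ℝ → ℝ → Prop} {m₁ m₂ K : ℝ} (hm₁ : 0 < m₁) (hm₂ : 0 < m₂) (hK : 0 < K)
    (hP : ∀ K' > 0, ∃ r > 0, ∀ A B, A ≤ r → B ≤ r → K' * A < m₁ * B → P A B)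
    (hQ : ∃ r > 0, ∀ A B, A ≤ r → B ≤ r → K * A < m₂ * B → Q A B) :
    ∃ L H, 0 < L ∧ 0 < H ∧ P H L ∧ Q L H := by
  set k := m₂ / (2 * K)
  have hk : 0 < k := by positivity
  obtain ⟨r₁, hr₁, hP⟩ := hP (m₁ * k / 2) (by positivity)
  obtain ⟨r₂, hr₂, hQ⟩ := hQ
  set H := min r₁ r₂ / (k + 1)
  have hH : 0 < H := by positivity
  have hsum : k * H + H = min r₁ r₂ := by simp only [H]; field_simp
  have hkH : 0 < k * H := by positivity
  have hKk : K * k = m₂ / 2 := by simp only [k]; field_simp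
  have hr₁ := min_le_left r₁ r₂
  have hr₂ := min_le_right r₁ r₂
  refine ⟨k * H, H, hkH, hH, hP _ _ (by linarith) (by linarith) (by nlinarith),
    hQ _ _ (by linarith) (by linarith) ?_⟩
  rw [← mul_assoc, hKk]
  linarith [mul_pos hm₂ hH]

theorem exists_intersection_parallelogram_general
    (γ₁ γ₂ : ℝ → ℝ × ℝ) (t₀ s₀ : ℝ)
    (hγ₁ : ContDiff ℝ 2 γ₁) (hγ₂ : ContDiff ℝ 2 γ₂)
    (hinj₁ : Set.InjOn γ₁ (Set.Icc 0 1)) (hinj₂ : Set.InjOn γ₂ (Set.Icc 0 1))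
    (ht₀ : t₀ ∈ Set.Ioo (0 : ℝ) 1) (hs₀ : s₀ ∈ Set.Ioo (0 : ℝ) 1)
    (hmeet : γ₁ t₀ = γ₂ s₀)
    (htrans : (deriv γ₁ t₀).1 * (deriv γ₂ s₀).2 - (deriv γ₁ t₀).2 * (deriv γ₂ s₀).1 ≠ 0)
    (h1y : (deriv γ₁ t₀).2 ≠ 0) :
    ∃ d L H : ℝ, 0 < L ∧ 0 < H ∧
      γ₁ t₀ ∈ interior (paraSet (γ₁ t₀) d L H) ∧
      (CrossingPattern γ₁ γ₂ (γ₁ t₀) d L H ∨ CrossingPattern γ₂ γ₁ (γ₁ t₀) d L H) := by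
  set d := (deriv γ₁ t₀).1 / (deriv γ₁ t₀).2
  have hv₁ : HasStrictDerivAt γ₁ (deriv γ₁ t₀) t₀ := hγ₁.contDiffAt.hasStrictDerivAt two_ne_zero
  have hv₂ : HasStrictDerivAt γ₂ (deriv γ₂ s₀) s₀ := hγ₂.contDiffAt.hasStrictDerivAt two_ne_zero
  have hnorm (x : ℝ × ℝ) : ‖x‖ ≤ (|d| + 1) * (|x.2| + |shear d x|) :=
    (norm_le_shear d x).trans_eq (by rw [add_comm (|shear d x|)])
  obtain ⟨L, H, hL, hH, cross₁, cross₂⟩ := exists_scales (half_pos (abs_pos.mpr h1y))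
    (half_pos (abs_pos.mpr (shear_div_ne_zero h1y htrans)))
    (by positivity : 0 < |(deriv γ₂ s₀).2| + 1)
    (fun K hK => exists_crossing_scale (.snd ℝ ℝ ℝ) (shear d) hnorm hγ₁.continuous hinj₁ ht₀ hv₁
      h1y (by rwa [shear_div_self h1y, abs_zero]))
    (exists_crossing_scale (shear d) (.snd ℝ ℝ ℝ) (norm_le_shear d) hγ₂.continuous hinj₂ hs₀ hv₂
      (shear_div_ne_zero h1y htrans) (lt_add_one _))
  rw [← hmeet] at cross₂
  exact ⟨d, L, H, hL, hH, mem_interior_paraSet hL hH, Or.inl (crossingPattern_of_crossings hL hH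
    cross₁.1 cross₁.2 cross₂.1 cross₂.2)⟩

/-- every transversal double point of two C² planar arcs, neither of which
has horizontal or vertical tangent there, admits an intersection parallelogram: a
parallelogram with horizontal top and bottom sides containing the double point in its
interior, such that one arc crosses each horizontal side exactly once, the other arc
crosses each of the two non-horizontal sides exactly once, and neither arc passes
through a corner. -/
theorem exists_intersection_parallelogram
    (γ₁ γ₂ : ℝ → ℝ × ℝ) (t₀ s₀ : ℝ)
    (hγ₁ : ContDiff ℝ 2 γ₁) (hγ₂ : ContDiff ℝ 2 γ₂)
    (hinj₁ : Set.InjOn γ₁ (Set.Icc 0 1)) (hinj₂ : Set.InjOn γ₂ (Set.Icc 0 1))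
    (ht₀ : t₀ ∈ Set.Ioo (0 : ℝ) 1) (hs₀ : s₀ ∈ Set.Ioo (0 : ℝ) 1)
    (hmeet : γ₁ t₀ = γ₂ s₀)
    (htrans : (deriv γ₁ t₀).1 * (deriv γ₂ s₀).2 - (deriv γ₁ t₀).2 * (deriv γ₂ s₀).1 ≠ 0)
    (h1x : (deriv γ₁ t₀).1 ≠ 0) (h1y : (deriv γ₁ t₀).2 ≠ 0)
    (h2x : (deriv γ₂ s₀).1 ≠ 0) (h2y : (deriv γ₂ s₀).2 ≠ 0) :
    ∃ d L H : ℝ, 0 < L ∧ 0 < H ∧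
      γ₁ t₀ ∈ interior (paraSet (γ₁ t₀) d L H) ∧
      (CrossingPattern γ₁ γ₂ (γ₁ t₀) d L H ∨ CrossingPattern γ₂ γ₁ (γ₁ t₀) d L H) :=
  exists_intersection_parallelogram_general γ₁ γ₂ t₀ s₀ hγ₁ hγ₂ hinj₁ hinj₂ ht₀ hs₀ hmeet htrans h1y
end
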